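/- Let A, B be n×n matrices whose valid cells are nonnegative and whose invalid cells equal −∞, and let A', B' be obtained by replacing each invalid cell (i,j) by the maximum over valid cells (i',j') with i ≤ i' ≤ j' ≤ j. Then for every valid cell (i,j), (A' ⋆ B')_{i,j} = (A ⋆ B)_{i,j}, where ⋆ is the (max,+) product. -/
import Mathlib


/-- The `(max,+)` product of `n×n` matrices over `ℤ ∪ {-∞}`. -/
def star (n : ℕ) (A B : ℕ → ℕ → WithBot ℤ) (i j : ℕ) : WithBot ℤ :=
  (Finset.range n).sup fun k => A i k + B k j

/-- Replace each invalid cell `(i,j)` (`¬(i ≤ j ∧ j - i ≤ L)`) by the maximum of `A`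
over valid cells `(i',j')` with `i ≤ i' ≤ j' ≤ j`. -/
def fillUp (A : ℕ → ℕ → WithBot ℤ) (L : ℕ) (i j : ℕ) : WithBot ℤ :=
  if i ≤ j ∧ j - i ≤ L then A i j
  else
    ((Finset.Icc i j ×ˢ Finset.Icc i j).filter
        (fun q => q.1 ≤ q.2 ∧ q.2 - q.1 ≤ L)).sup fun q => A q.1 q.2

/-- if `A, B` are `-∞` on invalid cells and nonnegative on valid cells
(validity threshold `L ≤ n`), then replacing invalid cells by the max over dominated
valid cells does not change the `(max,+)` product on valid cells. -/
theorem stmt7 (n L : ℕ) (hL : L ≤ n) (A B : ℕ → ℕ → WithBot ℤ)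
    (hA : ∀ i j, i < n → j < n →
      ((i ≤ j ∧ j - i ≤ L) → 0 ≤ A i j) ∧ (¬(i ≤ j ∧ j - i ≤ L) → A i j = ⊥))
    (hB : ∀ i j, i < n → j < n →
      ((i ≤ j ∧ j - i ≤ L) → 0 ≤ B i j) ∧ (¬(i ≤ j ∧ j - i ≤ L) → B i j = ⊥)) :
    ∀ i j, i < n → j < n → i ≤ j → j - i ≤ L →
      star n (fillUp A L) (fillUp B L) i j = star n A B i j := by
  intro i j hi hj hij hL'
  unfold _root_.star
  apply Finset.sup_congr rfl
  intro k hk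
  rw [Finset.mem_range] at hk
  by_cases hik : i ≤ k
  · by_cases hkj : k ≤ j
    · -- both cells valid
      have h1 : i ≤ k ∧ k - i ≤ L := ⟨hik, le_trans (Nat.sub_le_sub_right hkj i) hL'⟩
      have h2 : k ≤ j ∧ j - k ≤ L := ⟨hkj, le_trans (Nat.sub_le_sub_left hik j) hL'⟩
      rw [fillUp, if_pos h1, fillUp, if_pos h2]
    · -- k > j : B k j = ⊥ and fill of B is ⊥ (empty Icc)
      have hB' : B k j = ⊥ := (hB k j hk hj).2 (fun h => hkj h.1)
      have hIcc : Finset.Icc k j = ∅ := Finset.Icc_eq_empty (fun h => hkj h)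
      have hfill : fillUp B L k j = ⊥ := by
        rw [fillUp, if_neg (fun h => hkj h.1), hIcc]
        simp
      rw [hB', hfill, WithBot.add_bot, WithBot.add_bot]
  · -- k < i : A i k = ⊥ and fill of A is ⊥
    have hA' : A i k = ⊥ := (hA i k hi hk).2 (fun h => hik h.1)
    have hIcc : Finset.Icc i k = ∅ := Finset.Icc_eq_empty (fun h => hik h)
    have hfill : fillUp A L i k = ⊥ := by
      rw [fillUp, if_neg (fun h => hik h.1), hIcc]
      simp
    rw [hA', hfill, WithBot.bot_add, WithBot.bot_add]
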